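/- arXiv:2306.00474 — 2 statements merged into one kernel-verified Lean document; each statement's English description precedes it below -/
import Mathlib

section
/- Let M be a separable II₁ factor without property Gamma. Then the M-bimodule L²(M) ⊕ L²(M) does not lie in the closure of {L²(M)} in the Fell topology; equivalently, there exist no nets (ξ₁ⁿ), (ξ₂ⁿ) ⊂ L²(M) with lim_n ⟨x ξ_iⁿ y, ξ_jⁿ⟩ = ⟨x ξ_i y, ξ_j⟩ for all x,y ∈ M and i,j ∈ {1,2}, where ξ₁ = 1⊕0, ξ₂ = 0⊕1 ∈ L²(M)⊕L²(M). -/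
open Filter Topology

noncomputable section

/-- The 2-norm associated to a trace. -/
def nrm2 {M : Type*} [NonUnitalRing M] [StarRing M] (τ : M → ℂ) (x : M) : ℝ :=
  Real.sqrt (τ (star x * x)).re

section Aux

set_option linter.unusedSectionVars false

variable {M : Type*} [NormedRing M] [StarRing M] [CStarRing M]
    [NormedAlgebra ℂ M] [StarModule ℂ M]

lemma my_herm (τ : M →ₗ[ℂ] ℂ) (him : ∀ x : M, (τ (star x * x)).im = 0) (x y : M) :
    τ (star y * x) = starRingEnd ℂ (τ (star x * y)) := by
  have e1 : ∀ a b : M, τ (star (a + b) * (a + b))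
      = τ (star a * a) + (τ (star a * b) + τ (star b * a)) + τ (star b * b) := by
    intro a b
    rw [star_add, add_mul, mul_add, mul_add]
    simp only [map_add]
    ring
  have e2 : ∀ a b : M, τ (star (a + Complex.I • b) * (a + Complex.I • b))
      = τ (star a * a) + (Complex.I * τ (star a * b) - Complex.I * τ (star b * a))
        + τ (star b * b) := by
    intro a b
    rw [star_add, star_smul, add_mul, mul_add, mul_add]
    simp only [map_add, smul_mul_assoc, mul_smul_comm, map_smul, smul_eq_mul,
      Complex.star_def, Complex.conj_I]
    ring_nf
    rw [Complex.I_sq]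
    ring
  have h1 : (τ (star x * y)).im + (τ (star y * x)).im = 0 := by
    have h := him (x + y)
    rw [e1 x y] at h
    simpa [him x, him y] using h
  have h2 : (τ (star x * y)).re = (τ (star y * x)).re := by
    have h := him (x + Complex.I • y)
    rw [e2 x y] at h
    simp [Complex.add_im, Complex.sub_im, Complex.mul_im, him x, him y] at h
    linarith
  apply Complex.ext <;> simp [Complex.conj_re, Complex.conj_im] <;> linarith

lemma my_cs (τ : M →ₗ[ℂ] ℂ) (hτ_pos : ∀ x : M, 0 ≤ (τ (star x * x)).re ∧ (τ (star x * x)).im = 0)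
    (x y : M) : ‖τ (star y * x)‖ ≤ nrm2 τ x * nrm2 τ y := by
  letI c : PreInnerProductSpace.Core ℂ M :=
    { inner := fun a b => τ (star a * b)
      conj_inner_symm := fun a b => (my_herm τ (fun z => (hτ_pos z).2) b a).symm
      re_inner_nonneg := fun a => (hτ_pos a).1
      add_left := fun a b z => by
        show τ (star (a + b) * z) = τ (star a * z) + τ (star b * z)
        rw [star_add, add_mul, map_add]
      smul_left := fun a b r => by
        show τ (star (r • a) * b) = (starRingEnd ℂ) r * τ (star a * b)
        rw [star_smul, smul_mul_assoc, map_smul, smul_eq_mul, Complex.star_def] }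
  have h := InnerProductSpace.Core.inner_mul_inner_self_le (𝕜 := ℂ) (F := M) x y
  change ‖τ (star x * y)‖ * ‖τ (star y * x)‖
      ≤ (τ (star x * x)).re * (τ (star y * y)).re at h
  have hsymm : ‖τ (star x * y)‖ = ‖τ (star y * x)‖ := by
    rw [my_herm τ (fun z => (hτ_pos z).2) x y, RCLike.norm_conj]
  rw [hsymm] at h
  have h1 : ‖τ (star y * x)‖ * ‖τ (star y * x)‖
      ≤ (nrm2 τ x * nrm2 τ y) * (nrm2 τ x * nrm2 τ y) := by
    have e : (nrm2 τ x * nrm2 τ y) * (nrm2 τ x * nrm2 τ y)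
        = (τ (star x * x)).re * (τ (star y * y)).re := by
      unfold nrm2
      rw [show ∀ a b : ℝ, a * b * (a * b) = (a * a) * (b * b) from by intros; ring,
        Real.mul_self_sqrt (hτ_pos x).1, Real.mul_self_sqrt (hτ_pos y).1]
    rw [e]
    simpa using h
  have ha : 0 ≤ ‖τ (star y * x)‖ := norm_nonneg _
  have hx : (0:ℝ) ≤ nrm2 τ x := Real.sqrt_nonneg _
  have hy : (0:ℝ) ≤ nrm2 τ y := Real.sqrt_nonneg _
  nlinarith [h1, ha, mul_nonneg hx hy]

lemma central_expand (τ : M →ₗ[ℂ] ℂ) (htr : ∀ x y : M, τ (x * y) = τ (y * x)) (x a : M) :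
    τ (star (x * a - a * x) * (x * a - a * x))
      = τ (star a * (star x * x * a * 1)) - τ (star a * (star x * a * x))
        - τ (star a * (x * a * star x)) + τ (star a * (1 * a * (x * star x))) := by
  have e1 : star (x * a - a * x) * (x * a - a * x)
      = star a * (star x * x * a * 1) - star a * (star x * a * x)
        - star x * (star a * (x * a)) + star x * (star a * (a * x)) := by
    rw [star_sub, star_mul, star_mul]
    noncomm_ring
  rw [e1, map_add, map_sub, map_sub,
    htr (star x) (star a * (x * a)), htr (star x) (star a * (a * x)),
    show star a * (x * a) * star x = star a * (x * a * star x) from by noncomm_ring,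
    show star a * (a * x) * star x = star a * (1 * a * (x * star x)) from by noncomm_ring]

lemma shift_expand (τ : M →ₗ[ℂ] ℂ) (a b : M) (α β : ℂ) :
    τ (star b * a)
      = τ (star (b - β • 1) * (a - α • 1)) + α * τ (star (b - β • 1) * 1)
        + starRingEnd ℂ β * τ (star 1 * (a - α • 1)) + starRingEnd ℂ β * α * τ 1 := by
  simp only [star_sub, star_smul, star_one, sub_mul, mul_sub, map_sub, map_smul,
    smul_mul_assoc, mul_smul_comm, smul_eq_mul, Complex.star_def, one_mul, mul_one]
  ring

lemma nrm2_tendsto (τ : M →ₗ[ℂ] ℂ) {ι : Type} {l : Filter ι} {f : ι → M} {z : ℂ}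
    (h : Tendsto (fun n => τ (star (f n) * f n)) l (𝓝 z)) :
    Tendsto (fun n => nrm2 τ (f n)) l (𝓝 (Real.sqrt z.re)) := by
  have h1 : Tendsto (fun n => (τ (star (f n) * f n)).re) l (𝓝 z.re) :=
    (Complex.continuous_re.tendsto z).comp h
  exact (Real.continuous_sqrt.tendsto _).comp h1

end Aux

/-- if `M` is a separable II₁ factor without property Gamma (encoded via
Connes' theorem: almost tracial, almost central nets in `L²(M)` are asymptotically
scalar), then `L²(M) ⊕ L²(M)` does not lie in the closure of `{L²(M)}` in the Fell
topology: there are no nets `(ξ₁ⁿ), (ξ₂ⁿ) ⊂ M ⊂ L²(M)` with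
`τ((ξⱼⁿ)* x ξᵢⁿ y) → ⟨x ξᵢ y, ξⱼ⟩ = (if i = j then τ(xy) else 0)` for all `x, y ∈ M`,
where `ξ₁ = 1 ⊕ 0` and `ξ₂ = 0 ⊕ 1` in `L²(M) ⊕ L²(M)`. -/
theorem stmt_5 {M : Type*} [NormedRing M] [StarRing M] [CStarRing M]
    [NormedAlgebra ℂ M] [StarModule ℂ M]
    (τ : M →ₗ[ℂ] ℂ)
    (hτ_one : τ 1 = 1)
    (hτ_tracial : ∀ x y : M, τ (x * y) = τ (y * x))
    (hτ_pos : ∀ x : M, 0 ≤ (τ (star x * x)).re ∧ (τ (star x * x)).im = 0)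
    (hτ_faithful : ∀ x : M, τ (star x * x) = 0 → x = 0)
    -- Connes' theorem for factors without property Gamma:
    (hConnes : ∀ {ι : Type} (l : Filter ι), l.NeBot → ∀ ξ : ι → M,
      Tendsto (fun n => nrm2 τ (ξ n)) l (𝓝 1) →
      (∀ x : M, Tendsto (fun n => nrm2 τ (x * ξ n - ξ n * x)) l (𝓝 0)) →
      ∃ α : ι → ℂ, (∀ n, ‖α n‖ = 1) ∧
        Tendsto (fun n => nrm2 τ (ξ n - α n • (1 : M))) l (𝓝 0)) :
    ∀ (ι : Type) (l : Filter ι), l.NeBot →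
      ¬ ∃ ξ : Fin 2 → ι → M,
        ∀ (i j : Fin 2) (x y : M),
          Tendsto (fun n => τ (star (ξ j n) * (x * ξ i n * y))) l
            (𝓝 (if i = j then τ (x * y) else 0)) := by
  intro ι l hl hex
  obtain ⟨ξ, h⟩ := hex
  have hnrm1 : nrm2 τ (1 : M) = 1 := by
    unfold nrm2
    rw [star_one, one_mul, hτ_one]
    simp
  -- norm convergence
  have hnorm : ∀ i : Fin 2, Tendsto (fun n => nrm2 τ (ξ i n)) l (𝓝 1) := by
    intro i
    have h1 : Tendsto (fun n => τ (star (ξ i n) * ξ i n)) l (𝓝 1) := by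
      simpa [hτ_one] using h i i 1 1
    simpa using nrm2_tendsto τ h1
  -- asymptotic centrality
  have hcent : ∀ (i : Fin 2) (x : M),
      Tendsto (fun n => nrm2 τ (x * ξ i n - ξ i n * x)) l (𝓝 0) := by
    intro i x
    have T1 : Tendsto (fun n => τ (star (ξ i n) * (star x * x * ξ i n * 1))) l
        (𝓝 (τ (star x * x * 1))) := by simpa using h i i (star x * x) 1
    have T2 : Tendsto (fun n => τ (star (ξ i n) * (star x * ξ i n * x))) l
        (𝓝 (τ (star x * x))) := by simpa using h i i (star x) x
    have T3 : Tendsto (fun n => τ (star (ξ i n) * (x * ξ i n * star x))) l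
        (𝓝 (τ (x * star x))) := by simpa using h i i x (star x)
    have T4 : Tendsto (fun n => τ (star (ξ i n) * (1 * ξ i n * (x * star x)))) l
        (𝓝 (τ (1 * (x * star x)))) := by simpa using h i i 1 (x * star x)
    have hcomb : Tendsto (fun n =>
        τ (star (ξ i n) * (star x * x * ξ i n * 1)) - τ (star (ξ i n) * (star x * ξ i n * x))
          - τ (star (ξ i n) * (x * ξ i n * star x))
          + τ (star (ξ i n) * (1 * ξ i n * (x * star x)))) l (𝓝 0) := by
      have := ((T1.sub T2).sub T3).add T4
      have h0 : τ (star x * x * 1) - τ (star x * x) - τ (x * star x) + τ (1 * (x * star x))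
          = 0 := by rw [mul_one, one_mul]; ring
      rwa [h0] at this
    have hkey : Tendsto (fun n =>
        τ (star (x * ξ i n - ξ i n * x) * (x * ξ i n - ξ i n * x))) l (𝓝 0) := by
      simpa only [central_expand τ hτ_tracial x] using hcomb
    simpa using nrm2_tendsto τ hkey
  -- Connes' theorem
  obtain ⟨α₀, hα₀, hd₀⟩ := hConnes l hl (ξ 0) (hnorm 0) (hcent 0)
  obtain ⟨α₁, hα₁, hd₁⟩ := hConnes l hl (ξ 1) (hnorm 1) (hcent 1)
  -- orthogonality
  have hoff : Tendsto (fun n => τ (star (ξ 1 n) * ξ 0 n)) l (𝓝 0) := by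
    have := h 0 1 1 1
    simpa using this
  have habs : Tendsto (fun n => ‖τ (star (ξ 1 n) * ξ 0 n)‖) l (𝓝 0) := by
    have := (continuous_norm.tendsto 0).comp hoff
    simpa [Function.comp_def] using this
  set f : ι → ℝ := fun n =>
    ‖τ (star (ξ 1 n) * ξ 0 n)‖
      + nrm2 τ (ξ 0 n - α₀ n • 1) * nrm2 τ (ξ 1 n - α₁ n • 1)
      + nrm2 τ (ξ 1 n - α₁ n • 1) + nrm2 τ (ξ 0 n - α₀ n • 1) with hfdef
  have hf : Tendsto f l (𝓝 0) := by
    have := ((habs.add (hd₀.mul hd₁)).add hd₁).add hd₀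
    simpa using this
  have hlow : ∀ n, 1 ≤ f n := by
    intro n
    set a := ξ 0 n
    set b := ξ 1 n
    set d0 := ξ 0 n - α₀ n • (1 : M)
    set d1 := ξ 1 n - α₁ n • (1 : M)
    have key := shift_expand τ a b (α₀ n) (α₁ n)
    have hval : starRingEnd ℂ (α₁ n) * α₀ n * τ 1
        = τ (star b * a) - τ (star d1 * d0) - α₀ n * τ (star d1 * 1)
          - starRingEnd ℂ (α₁ n) * τ (star 1 * d0) := by
      rw [key]; ring
    have habs1 : ‖starRingEnd ℂ (α₁ n) * α₀ n * τ 1‖ = 1 := by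
      rw [norm_mul, norm_mul, hτ_one, RCLike.norm_conj, hα₁ n, hα₀ n]
      simp
    have htri : ‖starRingEnd ℂ (α₁ n) * α₀ n * τ 1‖
        ≤ ‖τ (star b * a)‖ + ‖τ (star d1 * d0)‖
          + ‖α₀ n * τ (star d1 * 1)‖
          + ‖starRingEnd ℂ (α₁ n) * τ (star 1 * d0)‖ := by
      rw [hval]
      have h1 := norm_sub_le (τ (star b * a) - τ (star d1 * d0) - α₀ n * τ (star d1 * 1))
        (starRingEnd ℂ (α₁ n) * τ (star 1 * d0))
      have h2 := norm_sub_le (τ (star b * a) - τ (star d1 * d0)) (α₀ n * τ (star d1 * 1))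
      have h3 := norm_sub_le (τ (star b * a)) (τ (star d1 * d0))
      linarith
    have hc1 : ‖τ (star d1 * d0)‖ ≤ nrm2 τ d0 * nrm2 τ d1 :=
      my_cs τ hτ_pos d0 d1
    have hc2 : ‖α₀ n * τ (star d1 * 1)‖ ≤ nrm2 τ d1 := by
      rw [norm_mul, hα₀ n, one_mul]
      have := my_cs τ hτ_pos (1 : M) d1
      rwa [hnrm1, one_mul] at this
    have hc3 : ‖starRingEnd ℂ (α₁ n) * τ (star 1 * d0)‖ ≤ nrm2 τ d0 := by
      rw [norm_mul, RCLike.norm_conj, hα₁ n, one_mul]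
      have := my_cs τ hτ_pos d0 (1 : M)
      rwa [hnrm1, mul_one] at this
    have : (1:ℝ) ≤ ‖τ (star b * a)‖ + nrm2 τ d0 * nrm2 τ d1
        + nrm2 τ d1 + nrm2 τ d0 := by
      rw [← habs1]
      linarith [htri, hc1, hc2, hc3]
    simpa [hfdef] using this
  have hev : ∀ᶠ n in l, f n < 1 := hf.eventually_lt_const (by norm_num)
  obtain ⟨n, hn⟩ := hev.exists
  linarith [hlow n]

end
end

section
/- Let M be a separable II₁ factor with property Gamma. Then the M-bimodule L²(M) ⊕ L²(M) lies in the closure of L²(M) in the Fell topology: there exist sequences (ξ₁ⁿ), (ξ₂ⁿ) ⊂ L²(M) such that lim_n ⟨x ξ_iⁿ y, ξ_jⁿ⟩ = ⟨x ξ_i y, ξ_j⟩ for all x, y ∈ M and i, j ∈ {1,2}, where ξ₁ = 1⊕0 and ξ₂ = 0⊕1 in L²(M)⊕L²(M). Concretely, one may take ξ₁ⁿ = 1 and ξ₂ⁿ = u_n, where (u_n) is a sequence of trace-zero unitaries asymptotically commuting with M. -/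
open Filter Topology

noncomputable section
set_option linter.unusedSectionVars false

section Aux

variable {M : Type*} [NormedRing M] [StarRing M] [CStarRing M]
    [NormedAlgebra ℂ M] [StarModule ℂ M]
    (τ : M →ₗ[ℂ] ℂ)

/-- positivity + unit implies `τ (star x) = conj (τ x)`. -/
lemma tau_star (hτ_one : τ 1 = 1)
    (hτ_pos : ∀ x : M, 0 ≤ (τ (star x * x)).re ∧ (τ (star x * x)).im = 0)
    (x : M) : τ (star x) = starRingEnd ℂ (τ x) := by
  have h1 := (hτ_pos (x + 1)).2
  have h2 := (hτ_pos (x + Complex.I • 1)).2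
  have e1 : star (x + 1) * (x + 1) = star x * x + star x + x + 1 := by
    rw [star_add, star_one]; noncomm_ring
  have e2 : star (x + Complex.I • 1) * (x + Complex.I • 1)
      = star x * x + Complex.I • star x - Complex.I • x + 1 := by
    rw [star_add, star_smul, star_one, Complex.star_def, Complex.conj_I]
    simp only [neg_smul, add_mul, mul_add, smul_mul_assoc, mul_smul_comm, mul_one, one_mul,
      smul_smul, Complex.I_mul_I, neg_mul, neg_smul, neg_neg, one_smul]
    noncomm_ring
    simp [smul_add, smul_smul, Complex.I_mul_I]
  rw [e1] at h1
  rw [e2] at h2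
  simp only [map_add, map_sub, map_smul, hτ_one, Complex.add_im, Complex.sub_im,
    (hτ_pos x).2, Complex.smul_im, Complex.smul_re, Complex.I_re, Complex.I_im,
    Complex.one_im, smul_eq_mul, Complex.mul_im, Complex.mul_re] at h1 h2
  apply Complex.ext <;> simp only [Complex.conj_re, Complex.conj_im] <;> linarith


lemma tau_real (hτ_pos : ∀ x : M, 0 ≤ (τ (star x * x)).re ∧ (τ (star x * x)).im = 0)
    (x : M) : τ (star x * x) = ((τ (star x * x)).re : ℝ) := by
  apply Complex.ext <;> simp [(hτ_pos x).2]

lemma cauchy_schwarz (hτ_one : τ 1 = 1)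
    (hτ_pos : ∀ x : M, 0 ≤ (τ (star x * x)).re ∧ (τ (star x * x)).im = 0)
    (hτ_faithful : ∀ x : M, τ (star x * x) = 0 → x = 0)
    (a b : M) : ‖τ (star a * b)‖ ≤ nrm2 τ a * nrm2 τ b := by
  set p := (τ (star a * a)).re with hp
  set q := (τ (star b * b)).re with hq
  set t := τ (star a * b) with ht
  by_cases hq0 : q = 0
  · have hb0 : b = 0 := hτ_faithful b (by rw [tau_real τ hτ_pos, ← hq, hq0]; simp)
    subst hb0
    simp [nrm2, ht]
  · have hq' : 0 < q := lt_of_le_of_ne (hτ_pos b).1 (Ne.symm hq0)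
    set c : M := (q : ℂ) • a - (starRingEnd ℂ t) • b with hc
    have hba : τ (star b * a) = starRingEnd ℂ t := by
      have : star b * a = star (star a * b) := by simp [star_mul]
      rw [this, tau_star τ hτ_one hτ_pos, ht]
    have hexp : τ (star c * c)
        = (q : ℂ) * (q : ℂ) * τ (star a * a) - (q : ℂ) * (starRingEnd ℂ t) * t
          - (q : ℂ) * (t * starRingEnd ℂ t)
          + t * starRingEnd ℂ t * τ (star b * b) := by
      have hsc : star c = (q : ℂ) • star a - t • star b := by
        simp [hc, star_sub, star_smul, Complex.conj_ofReal]
      rw [hc] at *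
      rw [hsc]
      simp only [sub_mul, mul_sub, smul_mul_assoc, mul_smul_comm, smul_smul,
        map_sub, map_smul, hba, ht.symm, smul_eq_mul]
      ring
    have hre : τ (star c * c)
        = ((q * q * p - q * Complex.normSq t - q * Complex.normSq t
            + Complex.normSq t * q : ℝ) : ℂ) := by
      rw [hexp, tau_real τ hτ_pos a, tau_real τ hτ_pos b, ← hp, ← hq,
        Complex.mul_conj]
      have h2 : (starRingEnd ℂ t) * t = (Complex.normSq t : ℂ) := by
        rw [mul_comm, Complex.mul_conj]
      rw [mul_assoc ((q:ℂ)) _ t, h2]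
      push_cast
      ring
    have hkey : 0 ≤ q * q * p - q * Complex.normSq t - q * Complex.normSq t
        + Complex.normSq t * q := by
      have := (hτ_pos c).1
      rw [hre] at this
      simpa using this
    have habs : ‖t‖ ^ 2 ≤ p * q := by
      rw [Complex.sq_norm]
      nlinarith [hq']
    have hp0 : 0 ≤ p := (hτ_pos a).1
    calc ‖t‖ = Real.sqrt (‖t‖ ^ 2) := by
          rw [Real.sqrt_sq (norm_nonneg t)]
      _ ≤ Real.sqrt (p * q) := Real.sqrt_le_sqrt habs
      _ = Real.sqrt p * Real.sqrt q := Real.sqrt_mul hp0 q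
      _ = nrm2 τ a * nrm2 τ b := rfl

lemma nrm2_unit_left {w : M} (hw : star w * w = 1) (a : M) :
    nrm2 τ (w * a) = nrm2 τ a := by
  unfold nrm2
  congr 2
  rw [star_mul, mul_assoc, ← mul_assoc (star w), hw, one_mul]

lemma nrm2_unit_right (hτ_tracial : ∀ x y : M, τ (x * y) = τ (y * x))
    {w : M} (hw : w * star w = 1) (a : M) :
    nrm2 τ (a * w) = nrm2 τ a := by
  unfold nrm2
  congr 2
  rw [star_mul, mul_assoc, hτ_tracial]
  have h : star a * (a * w) * star w = star a * a * (w * star w) := by noncomm_ring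
  rw [h, hw, mul_one]

lemma nrm2_neg (a : M) : nrm2 τ (-a) = nrm2 τ a := by
  simp [nrm2]

end Aux

/-- if `M` is a separable II₁ factor with property Gamma, then the
`M`-bimodule `L²(M) ⊕ L²(M)` lies in the closure of `L²(M)` in the Fell topology:
there are sequences `(ξ₁ⁿ), (ξ₂ⁿ) ⊂ M ⊂ L²(M)` with
`⟨x ξᵢⁿ y, ξⱼⁿ⟩ = τ((ξⱼⁿ)* x ξᵢⁿ y) → ⟨x ξᵢ y, ξⱼ⟩ = (if i = j then τ(xy) else 0)`;
concretely `ξ₁ⁿ = 1` and `ξ₂ⁿ = uₙ` for a sequence of trace-zero unitaries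
asymptotically commuting with `M`. -/
theorem stmt_6 {M : Type*} [NormedRing M] [StarRing M] [CStarRing M]
    [NormedAlgebra ℂ M] [StarModule ℂ M]
    (τ : M →ₗ[ℂ] ℂ)
    (hτ_one : τ 1 = 1)
    (hτ_tracial : ∀ x y : M, τ (x * y) = τ (y * x))
    (hτ_pos : ∀ x : M, 0 ≤ (τ (star x * x)).re ∧ (τ (star x * x)).im = 0)
    (hτ_faithful : ∀ x : M, τ (star x * x) = 0 → x = 0)
    -- factoriality: uniformly bounded asymptotically central sequences
    -- asymptotically factorize the trace
    (hfactor : ∀ v : ℕ → M, (∀ n, ‖v n‖ ≤ 1) →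
      (∀ x : M, Tendsto (fun n => nrm2 τ (v n * x - x * v n)) atTop (𝓝 0)) →
      ∀ x : M, Tendsto (fun n => τ (v n * x) - τ (v n) * τ x) atTop (𝓝 0))
    -- property Gamma: a sequence of trace-zero unitaries asymptotically commuting with `M`
    (u : ℕ → M)
    (hu_unitary : ∀ n, u n * star (u n) = 1 ∧ star (u n) * u n = 1)
    (hu_trace : ∀ n, τ (u n) = 0)
    (hu_central : ∀ x : M, Tendsto (fun n => nrm2 τ (u n * x - x * u n)) atTop (𝓝 0)) :
    ∃ ξ : Fin 2 → ℕ → M,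
      (∀ n, ξ 0 n = 1) ∧ (∀ n, ξ 1 n = u n) ∧
      ∀ (i j : Fin 2) (x y : M),
        Tendsto (fun n => τ (star (ξ j n) * (x * ξ i n * y))) atTop
          (𝓝 (if i = j then τ (x * y) else 0)) := by

  have h1ne : (1 : M) ≠ 0 := by
    intro h
    rw [h, map_zero] at hτ_one
    exact one_ne_zero hτ_one.symm
  haveI : Nontrivial M := ⟨⟨1, 0, h1ne⟩⟩
  have hnorm : ∀ n, ‖u n‖ ≤ 1 := by
    intro n
    have h := CStarRing.norm_star_mul_self (x := u n)
    rw [(hu_unitary n).2, norm_one] at h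
    nlinarith [norm_nonneg (u n)]
  have hnorm_star : ∀ n, ‖star (u n)‖ ≤ 1 := fun n => by
    rw [norm_star]; exact hnorm n
  have hstar_central : ∀ x : M,
      Tendsto (fun n => nrm2 τ (star (u n) * x - x * star (u n))) atTop (𝓝 0) := by
    intro x
    have heq : ∀ n, nrm2 τ (star (u n) * x - x * star (u n))
        = nrm2 τ (u n * x - x * u n) := by
      intro n
      have key : star (u n) * x - x * star (u n)
          = -(star (u n) * (u n * x - x * u n) * star (u n)) := by
        have h : star (u n) * (u n * x - x * u n) * star (u n)
            = (star (u n) * u n) * x * star (u n)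
              - star (u n) * x * (u n * star (u n)) := by noncomm_ring
        rw [h, (hu_unitary n).2, (hu_unitary n).1, one_mul, mul_one, neg_sub]
      rw [key, nrm2_neg,
        nrm2_unit_right τ hτ_tracial (by rw [star_star]; exact (hu_unitary n).2),
        nrm2_unit_left τ (by rw [star_star]; exact (hu_unitary n).1)]
    have := hu_central x
    rwa [show (fun n => nrm2 τ (u n * x - x * u n))
        = fun n => nrm2 τ (star (u n) * x - x * star (u n)) from (funext heq).symm]
      at this
  have hfac := hfactor u hnorm hu_central
  have hfacs := hfactor (fun n => star (u n)) hnorm_star hstar_central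
  have hτustar : ∀ n, τ (star (u n)) = 0 := fun n => by
    rw [tau_star τ hτ_one hτ_pos, hu_trace n, map_zero]
  refine ⟨![fun _ => 1, u], fun n => rfl, fun n => rfl, ?_⟩
  intro i j x y
  fin_cases i <;> fin_cases j
  · -- i = 0, j = 0
    show Tendsto (fun n => τ (star (1 : M) * (x * (1 : M) * y))) atTop
      (𝓝 (if (0 : Fin 2) = 0 then τ (x * y) else 0))
    simp only [star_one, one_mul, mul_one, if_pos rfl]
    exact tendsto_const_nhds
  · -- i = 0, j = 1
    show Tendsto (fun n => τ (star (u n) * (x * (1 : M) * y))) atTop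
      (𝓝 (if (0 : Fin 2) = 1 then τ (x * y) else 0))
    rw [if_neg (by decide)]
    have h := hfacs (x * y)
    simp only [hτustar, zero_mul, sub_zero] at h
    simpa only [mul_one] using h
  · -- i = 1, j = 0
    show Tendsto (fun n => τ (star (1 : M) * (x * u n * y))) atTop
      (𝓝 (if (1 : Fin 2) = 0 then τ (x * y) else 0))
    rw [if_neg (by decide)]
    have h := hfac (y * x)
    simp only [hu_trace, zero_mul, sub_zero] at h
    have key : ∀ n, τ (star (1 : M) * (x * u n * y)) = τ (u n * (y * x)) := by
      intro n
      rw [star_one, one_mul, hτ_tracial (x * u n) y, ← mul_assoc,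
        hτ_tracial (y * x) (u n)]
    rw [show (fun n => τ (star (1 : M) * (x * u n * y)))
        = fun n => τ (u n * (y * x)) from funext key]
    exact h
  · -- i = 1, j = 1
    show Tendsto (fun n => τ (star (u n) * (x * u n * y))) atTop
      (𝓝 (if (1 : Fin 2) = 1 then τ (x * y) else 0))
    rw [if_pos rfl, ← tendsto_sub_nhds_zero_iff, tendsto_zero_iff_norm_tendsto_zero]
    have hdiff : ∀ n, τ (star (u n) * (x * u n * y)) - τ (x * y)
        = τ ((star (u n) * x * u n - x) * y) := by
      intro n
      rw [sub_mul, map_sub]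
      congr 2
      noncomm_ring
    have hd : ∀ n, star (u n) * x * u n - x
        = star (u n) * (x * u n - u n * x) := by
      intro n
      rw [mul_sub, ← mul_assoc, ← mul_assoc, (hu_unitary n).2, one_mul]
    have hbound : ∀ n, ‖τ (star (u n) * (x * u n * y)) - τ (x * y)‖
        ≤ nrm2 τ (star y) * nrm2 τ (u n * x - x * u n) := by
      intro n
      rw [hdiff n, hτ_tracial]
      have hcs := cauchy_schwarz τ hτ_one hτ_pos hτ_faithful (star y)
        (star (u n) * x * u n - x)
      rw [star_star] at hcs
      have h2 : nrm2 τ (star (u n) * x * u n - x) = nrm2 τ (u n * x - x * u n) := by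
        rw [hd n, nrm2_unit_left τ (by rw [star_star]; exact (hu_unitary n).1),
          (neg_sub (u n * x) (x * u n)).symm, nrm2_neg]
      rw [h2] at hcs
      exact hcs
    apply squeeze_zero (fun n => norm_nonneg _) hbound
    have := (hu_central x).const_mul (nrm2 τ (star y))
    simpa using this

end
end
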